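/- Let a, b be positive integers with b − a > 2. Then the double zeta value with a negative argument satisfies ζ(b, −a) = Σ_{0 < m < n} m^{a} n^{−b} = (1/(a+1)) · Σ_{k=0}^{a} binom(a+1, k) · B_k · ζ(b−a−1+k), where ζ is the Riemann zeta function. -/

import Mathlib

open Complex

noncomputable section

/-- The double zeta value `ζ(A,B) = Σ_{l₁>l₂>0} l₁^{−A} l₂^{−B}` (here `B` may be `≤ 0`,
the series then being `Σ_{0<l₂<l₁} l₂^{|B|} l₁^{−A}`). -/
def dzeta (A B : ℤ) : ℂ :=
  ∑' p : {q : ℕ × ℕ // 0 < q.2 ∧ q.2 < q.1}, ((p.1.1 : ℕ) : ℂ) ^ (-A) * ((p.1.2 : ℕ) : ℂ) ^ (-B)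

/-! Summing `Σ_{0<m<n} mᵃ n^{−b}` over `m` first turns it, by Faulhaber's formula
`Σ_{m<n} mᵃ = (1/(a+1)) Σ_{k ≤ a} binom(a+1,k) B_k n^{a+1−k}`, into a finite combination of the
series `Σ_n n^{−(b−a−1+k)} = ζ(b−a−1+k)`. All of these converge once `b − a − 1 ≥ 2`, which also
makes the double series absolutely convergent, so that the rearrangement is legitimate. -/

open Finset

theorem tsum_prod_eq_tsum_sum_of_support_subset {E : Type*} [NormedAddCommGroup E]
    [CompleteSpace E] {f : ℕ × ℕ → E} (s : ℕ → Finset ℕ) (hf : ∀ n m, m ∉ s n → f (n, m) = 0)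
    (hs : Summable fun n => ∑ m ∈ s n, ‖f (n, m)‖) :
    ∑' q, f q = ∑' n, ∑ m ∈ s n, f (n, m) := by
  have hfib : ∀ n, Summable fun m => f (n, m) := fun n =>
    summable_of_ne_finset_zero fun m hm => hf n m hm
  have hfib_norm : ∀ n, ∑' m, ‖f (n, m)‖ = ∑ m ∈ s n, ‖f (n, m)‖ := fun n =>
    tsum_eq_sum fun m hm => by rw [hf n m hm, norm_zero]
  have hsum : Summable f := by
    refine Summable.of_norm ((summable_prod_of_nonneg fun _ => norm_nonneg _).mpr ⟨?_, ?_⟩)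
    · exact fun n => summable_of_ne_finset_zero fun m hm => by rw [hf n m hm, norm_zero]
    · simpa only [hfib_norm] using hs
  rw [hsum.tsum_prod' hfib]
  exact tsum_congr fun n => tsum_eq_sum fun m hm => hf n m hm

theorem pow_mul_zpow_neg_eq_one_div_pow {K : Type*} [Field K] (x : K) {j b : ℕ}
    (h : j < b) : x ^ j * x ^ (-(b : ℤ)) = 1 / x ^ (b - j) := by
  rcases eq_or_ne x 0 with rfl | hx
  · rw [zero_zpow _ (by omega), mul_zero, zero_pow (by omega), div_zero]
  · rw [zpow_neg, zpow_natCast, ← Nat.sub_add_cancel h.le, pow_add, Nat.add_sub_cancel]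
    field_simp

theorem summable_sum_range_pow_mul_zpow_neg {a b : ℕ} (hb : a + 3 ≤ b) :
    Summable fun n : ℕ => ∑ m ∈ range n, (m : ℝ) ^ a * (n : ℝ) ^ (-(b : ℤ)) := by
  refine (Real.summable_one_div_nat_pow.mpr (by omega : 1 < b - (a + 1))).of_nonneg_of_le
    (fun n => by positivity) fun n => ?_
  calc ∑ m ∈ range n, (m : ℝ) ^ a * (n : ℝ) ^ (-(b : ℤ))
      ≤ ∑ m ∈ range n, (n : ℝ) ^ a * (n : ℝ) ^ (-(b : ℤ)) := by
        gcongr with m hm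
        exact (mem_range.mp hm).le
    _ = (n : ℝ) ^ (a + 1) * (n : ℝ) ^ (-(b : ℤ)) := by
        rw [sum_const, card_range, nsmul_eq_mul, pow_succ]
        ring
    _ = 1 / (n : ℝ) ^ (b - (a + 1)) := pow_mul_zpow_neg_eq_one_div_pow _ (by omega)

theorem tsum_pos_lt_pairs_eq_tsum_sum_range {a b : ℕ} (ha : a ≠ 0) (hb : a + 3 ≤ b) :
    ∑' p : {q : ℕ × ℕ // 0 < q.2 ∧ q.2 < q.1}, ((p.1.2 : ℂ)) ^ a * ((p.1.1 : ℂ)) ^ (-(b : ℤ)) =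
      ∑' n : ℕ, (∑ m ∈ range n, (m : ℂ) ^ a) * (n : ℂ) ^ (-(b : ℤ)) := by
  set S : Set (ℕ × ℕ) := {q | 0 < q.2 ∧ q.2 < q.1}
  have hS : ∀ n m, m < n → S.indicator (fun q => (q.2 : ℂ) ^ a * (q.1 : ℂ) ^ (-(b : ℤ))) (n, m) =
      (m : ℂ) ^ a * (n : ℂ) ^ (-(b : ℤ)) := by
    intro n m hmn
    -- `range n` also contains `m = 0`, which contributes `0 ^ a = 0` only because `a ≠ 0`
    rcases Nat.eq_zero_or_pos m with rfl | hm
    · simp [S, ha]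
    · simp [S, hm, hmn]
  refine (tsum_subtype S fun q => (q.2 : ℂ) ^ a * (q.1 : ℂ) ^ (-(b : ℤ))).trans ?_
  rw [tsum_prod_eq_tsum_sum_of_support_subset range]
  · refine tsum_congr fun n => ?_
    rw [sum_mul]
    exact sum_congr rfl fun m hm => hS n m (mem_range.mp hm)
  · intro n m hm
    exact Set.indicator_of_notMem (fun h => hm (mem_range.mpr h.2)) _
  · refine (summable_sum_range_pow_mul_zpow_neg hb).congr fun n => sum_congr rfl fun m hm => ?_
    rw [hS n m (mem_range.mp hm)]
    simp

theorem tsum_sum_range_pow_mul_zpow_neg_eq_sum_bernoulli_mul_riemannZeta {a b : ℕ}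
    (hb : a + 3 ≤ b) :
    ∑' n : ℕ, (∑ m ∈ range n, (m : ℂ) ^ a) * (n : ℂ) ^ (-(b : ℤ)) =
      1 / ((a : ℂ) + 1) * ∑ k ∈ range (a + 1),
        ((a + 1).choose k : ℂ) * (bernoulli k : ℂ) * riemannZeta ((b - a - 1 + k : ℕ) : ℂ) := by
  have hfaulhaber : ∀ n : ℕ, ∑ m ∈ range n, (m : ℂ) ^ a =
      ∑ k ∈ range (a + 1), (bernoulli k : ℂ) * (a + 1).choose k * n ^ (a + 1 - k) / (a + 1) := by
    intro n
    exact_mod_cast congrArg ((↑) : ℚ → ℂ) (sum_range_pow n a)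
  have hzeta : ∀ k, riemannZeta ((b - a - 1 + k : ℕ) : ℂ) =
      ∑' n : ℕ, 1 / (n : ℂ) ^ (b - a - 1 + k) := fun k =>
    zeta_nat_eq_tsum_of_gt_one (by omega)
  have hterm : ∀ k ∈ range (a + 1), ∀ n : ℕ,
      (n : ℂ) ^ (a + 1 - k) * (n : ℂ) ^ (-(b : ℤ)) = 1 / (n : ℂ) ^ (b - a - 1 + k) := by
    intro k hk n
    have hk := mem_range.mp hk
    rw [pow_mul_zpow_neg_eq_one_div_pow _ (by omega), show b - (a + 1 - k) = b - a - 1 + k by omega]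
  calc ∑' n : ℕ, (∑ m ∈ range n, (m : ℂ) ^ a) * (n : ℂ) ^ (-(b : ℤ))
      = ∑' n : ℕ, ∑ k ∈ range (a + 1), 1 / ((a : ℂ) + 1) * ((a + 1).choose k : ℂ) *
          (bernoulli k : ℂ) * (1 / (n : ℂ) ^ (b - a - 1 + k)) := by
        refine tsum_congr fun n => ?_
        rw [hfaulhaber, sum_mul]
        refine sum_congr rfl fun k hk => ?_
        rw [← hterm k hk n]
        ring
    _ = ∑ k ∈ range (a + 1), 1 / ((a : ℂ) + 1) * ((a + 1).choose k : ℂ) *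
          (bernoulli k : ℂ) * riemannZeta ((b - a - 1 + k : ℕ) : ℂ) := by
        rw [Summable.tsum_finsetSum fun k _ => ?_]
        · exact sum_congr rfl fun k _ => by rw [tsum_mul_left, hzeta]
        · refine Summable.mul_left _ (Summable.of_norm ?_)
          simpa using Real.summable_one_div_nat_pow.mpr (by omega : 1 < b - a - 1 + k)
    _ = _ := by
        rw [mul_sum]
        exact sum_congr rfl fun k _ => by ring

theorem statement11
    (a b : ℕ) (ha : 0 < a) (hb : (2 : ℤ) < (b : ℤ) - (a : ℤ)) :
    dzeta (b : ℤ) (-(a : ℤ)) =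
      (∑' p : {q : ℕ × ℕ // 0 < q.2 ∧ q.2 < q.1},
          ((p.1.2 : ℕ) : ℂ) ^ (a : ℕ) * ((p.1.1 : ℕ) : ℂ) ^ (-(b : ℤ))) ∧
    dzeta (b : ℤ) (-(a : ℤ)) =
      (1 / ((a : ℂ) + 1)) *
        ∑ k ∈ Finset.range (a + 1),
          ((a + 1).choose k : ℂ) * ((bernoulli k : ℚ) : ℂ) *
            riemannZeta (((b : ℤ) - (a : ℤ) - 1 + (k : ℤ) : ℤ) : ℂ) := by
  have hba : a + 3 ≤ b := by omega
  have hdzeta : dzeta (b : ℤ) (-(a : ℤ)) =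
      ∑' p : {q : ℕ × ℕ // 0 < q.2 ∧ q.2 < q.1},
        ((p.1.2 : ℂ)) ^ a * ((p.1.1 : ℂ)) ^ (-(b : ℤ)) :=
    tsum_congr fun p => by rw [neg_neg, zpow_natCast, mul_comm]
  have harg : ∀ k : ℕ, (((b : ℤ) - (a : ℤ) - 1 + (k : ℤ) : ℤ) : ℂ) = ((b - a - 1 + k : ℕ) : ℂ) :=
    fun k => by exact_mod_cast (by omega : (b : ℤ) - a - 1 + k = ((b - a - 1 + k : ℕ) : ℤ))
  refine ⟨hdzeta, ?_⟩
  rw [hdzeta, tsum_pos_lt_pairs_eq_tsum_sum_range ha.ne' hba,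
    tsum_sum_range_pow_mul_zpow_neg_eq_sum_bernoulli_mul_riemannZeta hba]
  simp only [harg]
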